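/- arXiv:1304.3049 — 2 statements merged into one kernel-verified Lean document; each statement's English description precedes it below -/
import Mathlib

section
/- Let g:(0,∞)→ℝ be C² with |s g'(s)| + |s² g''(s)| ≤ C(s^{α₁} + s^{α₂}) for all s>0, where 0<α₁≤α₂. Then for all s₁,s₂>0: |s₁² g'(s₁²) - s₂² g'(s₂²)| ≤ C' ( |s₁-s₂|^{min(2α₁,1)} (s₁+s₂)^{max(2α₁-1,0)} + |s₁-s₂|^{min(2α₂,1)} (s₁+s₂)^{max(2α₂-1,0)} ) for some constant C' depending only on C, α₁, α₂. -/
/-!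
Put `F s = s² g'(s²)`. By the chain rule `F'(s) = (2/s) (s² g'(s²) + s⁴ g''(s²))`, so the growth
bound at `s²` gives `|F'(s)| ≤ φ'(s)` with `φ(s) = (C/α₁) s^{2α₁} + (C/α₂) s^{2α₂}`. Comparing
derivatives, `|F(s₁) - F(s₂)| ≤ φ(s₁) - φ(s₂)` for `s₂ ≤ s₁`, and each power `s^β` is Hölder in
the stated form: subadditive when `β ≤ 1`, and Lipschitz with constant `β (s₁ + s₂)^{β-1}` on
`[s₂, s₁]` when `β ≥ 1`.
-/

open Set

theorem abs_sub_le_sub_of_abs_deriv_le {f f' φ φ' : ℝ → ℝ} {a b : ℝ} (hab : a ≤ b)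
    (hf : ∀ x ∈ Icc a b, HasDerivAt f (f' x) x) (hφ : ∀ x ∈ Icc a b, HasDerivAt φ (φ' x) x)
    (bound : ∀ x ∈ Icc a b, |f' x| ≤ φ' x) : |f b - f a| ≤ φ b - φ a :=
  image_norm_le_of_norm_deriv_right_le_deriv_boundary'
    (f := fun x => f x - f a) (B := fun x => φ x - φ a)
    (fun x hx => ((hf x hx).sub_const (f a)).continuousAt.continuousWithinAt)
    (fun x hx => ((hf x (Ico_subset_Icc_self hx)).sub_const (f a)).hasDerivWithinAt)
    (by simp)
    (fun x hx => ((hφ x hx).sub_const (φ a)).continuousAt.continuousWithinAt)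
    (fun x hx => ((hφ x (Ico_subset_Icc_self hx)).sub_const (φ a)).hasDerivWithinAt)
    (fun x hx => bound x (Ico_subset_Icc_self hx)) (right_mem_Icc.2 hab)

namespace Real

theorem rpow_sub_rpow_le_rpow_sub {β a b : ℝ} (hβ₀ : 0 ≤ β) (hβ₁ : β ≤ 1) (hb : 0 ≤ b)
    (hab : b ≤ a) : a ^ β - b ^ β ≤ (a - b) ^ β := by
  have h := rpow_add_le_add_rpow hb (sub_nonneg.2 hab) hβ₀ hβ₁
  rw [add_sub_cancel] at h
  linarith

theorem rpow_sub_rpow_le_mul_sub_mul_add_rpow {β a b : ℝ} (hβ : 1 ≤ β) (hb : 0 ≤ b)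
    (hab : b ≤ a) : a ^ β - b ^ β ≤ β * (a - b) * (a + b) ^ (β - 1) := by
  have h := abs_sub_le_sub_of_abs_deriv_le (f := fun x => x ^ β)
    (φ := fun x => β * (a + b) ^ (β - 1) * x) hab
    (fun _ _ => hasDerivAt_rpow_const (Or.inr hβ))
    (fun x _ => (hasDerivAt_id x).const_mul _)
    (fun x hx => by
      have hx₀ : 0 ≤ x := hb.trans hx.1
      rw [abs_of_nonneg (by positivity), mul_one]
      gcongr
      linarith [hx.2])
  calc a ^ β - b ^ β ≤ |a ^ β - b ^ β| := le_abs_self _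
    _ ≤ _ := h
    _ = β * (a - b) * (a + b) ^ (β - 1) := by ring

theorem rpow_sub_rpow_le_holder {β a b : ℝ} (hβ : 0 < β) (hb : 0 ≤ b) (hab : b ≤ a) :
    a ^ β - b ^ β ≤ max β 1 * ((a - b) ^ min β 1 * (a + b) ^ max (β - 1) 0) := by
  rcases le_total β 1 with hβ₁ | hβ₁
  · rw [min_eq_left hβ₁, max_eq_right (show β - 1 ≤ 0 by linarith), max_eq_right hβ₁, rpow_zero, one_mul,
      mul_one]
    exact rpow_sub_rpow_le_rpow_sub hβ.le hβ₁ hb hab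
  · rw [min_eq_right hβ₁, max_eq_left (show 0 ≤ β - 1 by linarith), max_eq_left hβ₁, rpow_one, ← mul_assoc]
    exact rpow_sub_rpow_le_mul_sub_mul_add_rpow hβ₁ hb hab

end Real

theorem hasDerivAt_sq_mul_deriv_comp_sq {g : ℝ → ℝ} {s : ℝ}
    (hg : DifferentiableAt ℝ (deriv g) (s ^ 2)) :
    HasDerivAt (fun s => s ^ 2 * deriv g (s ^ 2))
      (2 * s * deriv g (s ^ 2) + 2 * s ^ 3 * deriv (deriv g) (s ^ 2)) s := by
  have hsq : HasDerivAt (fun s : ℝ => s ^ 2) (2 * s) s := by simpa using hasDerivAt_pow 2 s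
  have hg' : HasDerivAt (deriv g) (deriv (deriv g) (s ^ 2)) (s ^ 2) := hg.hasDerivAt
  have hcomp : HasDerivAt (fun s => deriv g (s ^ 2)) (deriv (deriv g) (s ^ 2) * (2 * s)) s :=
    HasDerivAt.comp (h := fun x : ℝ => x ^ 2) s hg' hsq
  exact (hsq.mul hcomp).congr_deriv (by ring)

theorem abs_deriv_sq_mul_deriv_comp_sq_le {g : ℝ → ℝ} {s M : ℝ} (hs : 0 < s)
    (h : |s ^ 2 * deriv g (s ^ 2)| + |(s ^ 2) ^ 2 * deriv (deriv g) (s ^ 2)| ≤ M) :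
    |2 * s * deriv g (s ^ 2) + 2 * s ^ 3 * deriv (deriv g) (s ^ 2)| ≤ 2 * M / s := by
  rw [le_div_iff₀ hs]
  calc |2 * s * deriv g (s ^ 2) + 2 * s ^ 3 * deriv (deriv g) (s ^ 2)| * s
      = |(2 * s * deriv g (s ^ 2) + 2 * s ^ 3 * deriv (deriv g) (s ^ 2)) * s| := by
        rw [abs_mul, abs_of_pos hs]
    _ = |2 * (s ^ 2 * deriv g (s ^ 2)) + 2 * ((s ^ 2) ^ 2 * deriv (deriv g) (s ^ 2))| := by
        congr 1
        ring
    _ ≤ |2 * (s ^ 2 * deriv g (s ^ 2))| + |2 * ((s ^ 2) ^ 2 * deriv (deriv g) (s ^ 2))| :=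
        abs_add_le _ _
    _ = 2 * |s ^ 2 * deriv g (s ^ 2)| + 2 * |(s ^ 2) ^ 2 * deriv (deriv g) (s ^ 2)| := by
        rw [abs_mul (2 : ℝ), abs_mul (2 : ℝ), abs_two]
    _ ≤ 2 * M := by linarith

theorem abs_sq_mul_deriv_comp_sq_sub_le {g : ℝ → ℝ} {C α₁ α₂ : ℝ} (hα₁ : α₁ ≠ 0) (hα₂ : α₂ ≠ 0)
    (hg : ContDiffOn ℝ 2 g (Ioi 0))
    (hbound : ∀ s : ℝ, 0 < s →
      |s * deriv g s| + |s ^ 2 * deriv (deriv g) s| ≤ C * (s ^ α₁ + s ^ α₂))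
    {a b : ℝ} (ha : 0 < a) (hab : a ≤ b) :
    |b ^ 2 * deriv g (b ^ 2) - a ^ 2 * deriv g (a ^ 2)|
      ≤ C / α₁ * (b ^ (2 * α₁) - a ^ (2 * α₁)) + C / α₂ * (b ^ (2 * α₂) - a ^ (2 * α₂)) := by
  have hg' : ContDiffOn ℝ 1 (deriv g) (Ioi 0) := hg.deriv_of_isOpen isOpen_Ioi (by norm_num)
  have hdiff : ∀ t : ℝ, 0 < t → DifferentiableAt ℝ (deriv g) t := fun t ht =>
    (hg'.differentiableOn one_ne_zero).differentiableAt (isOpen_Ioi.mem_nhds ht)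
  have hpow : ∀ α : ℝ, α ≠ 0 → ∀ s : ℝ, 0 < s →
      HasDerivAt (fun s => C / α * s ^ (2 * α)) (2 * C * (s ^ 2) ^ α / s) s := by
    intro α hα s hs
    refine ((Real.hasDerivAt_rpow_const (Or.inl hs.ne')).const_mul (C / α)).congr_deriv ?_
    rw [Real.rpow_sub hs, Real.rpow_one, ← Real.rpow_two, ← Real.rpow_mul hs.le]
    field_simp
  refine (abs_sub_le_sub_of_abs_deriv_le hab
    (fun x hx => hasDerivAt_sq_mul_deriv_comp_sq (hdiff _ (pow_pos (ha.trans_le hx.1) 2)))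
    (fun x hx => (hpow α₁ hα₁ x (ha.trans_le hx.1)).add (hpow α₂ hα₂ x (ha.trans_le hx.1)))
    (fun x hx => ?_)).trans_eq (by simp only [Pi.add_apply]; ring)
  exact (abs_deriv_sq_mul_deriv_comp_sq_le (ha.trans_le hx.1)
    (hbound _ (pow_pos (ha.trans_le hx.1) 2))).trans_eq (by ring)

/-- Hölder continuity of `s ↦ s² g'(s²)` under the growth bound
`|s g'(s)| + |s² g''(s)| ≤ C (s^α₁ + s^α₂)`. -/
theorem stmt_3 (g : ℝ → ℝ) (C α₁ α₂ : ℝ) (hC : 0 < C) (hα₁ : 0 < α₁) (hα₁₂ : α₁ ≤ α₂)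
    (hg : ContDiffOn ℝ 2 g (Set.Ioi 0))
    (hbound : ∀ s : ℝ, 0 < s →
      |s * deriv g s| + |s ^ 2 * deriv (deriv g) s| ≤ C * (s ^ α₁ + s ^ α₂)) :
    ∃ C' : ℝ, 0 < C' ∧ ∀ s₁ s₂ : ℝ, 0 < s₁ → 0 < s₂ →
      |s₁ ^ 2 * deriv g (s₁ ^ 2) - s₂ ^ 2 * deriv g (s₂ ^ 2)|
        ≤ C' * (|s₁ - s₂| ^ min (2 * α₁) 1 * (s₁ + s₂) ^ max (2 * α₁ - 1) 0
              + |s₁ - s₂| ^ min (2 * α₂) 1 * (s₁ + s₂) ^ max (2 * α₂ - 1) 0) := by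
  have hα₂ : 0 < α₂ := hα₁.trans_le hα₁₂
  refine ⟨C / α₁ * max (2 * α₁) 1 + C / α₂ * max (2 * α₂) 1, by positivity, ?_⟩
  intro s₁ s₂ hs₁ hs₂
  wlog hle : s₂ ≤ s₁ generalizing s₁ s₂
  · have h := this s₂ s₁ hs₂ hs₁ (le_of_not_ge hle)
    rwa [abs_sub_comm, abs_sub_comm s₂, add_comm s₂] at h
  rw [abs_of_nonneg (sub_nonneg.2 hle)]
  set T₁ := (s₁ - s₂) ^ min (2 * α₁) 1 * (s₁ + s₂) ^ max (2 * α₁ - 1) 0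
  set T₂ := (s₁ - s₂) ^ min (2 * α₂) 1 * (s₁ + s₂) ^ max (2 * α₂ - 1) 0
  have hcross₁ : 0 ≤ C / α₂ * max (2 * α₂) 1 * T₁ := by positivity
  have hcross₂ : 0 ≤ C / α₁ * max (2 * α₁) 1 * T₂ := by positivity
  calc |s₁ ^ 2 * deriv g (s₁ ^ 2) - s₂ ^ 2 * deriv g (s₂ ^ 2)|
      ≤ C / α₁ * (s₁ ^ (2 * α₁) - s₂ ^ (2 * α₁)) + C / α₂ * (s₁ ^ (2 * α₂) - s₂ ^ (2 * α₂)) :=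
        abs_sq_mul_deriv_comp_sq_sub_le hα₁.ne' hα₂.ne' hg hbound hs₂ hle
    _ ≤ C / α₁ * (max (2 * α₁) 1 * T₁) + C / α₂ * (max (2 * α₂) 1 * T₂) := by
        gcongr <;> exact Real.rpow_sub_rpow_le_holder (by positivity) hs₂.le hle
    _ ≤ _ := by linarith
end

section
/- Let g∈C⁰([0,∞),ℝ)∩C²((0,∞),ℝ) with g(0)=0 and |s g'(s)| ≤ C(s^{α₁}+s^{α₂}) for all s>0, where 0<α₁≤α₂. Then for all s₁,s₂>0: |g(s₁²)-g(s₂²)| ≤ C' ( |s₁-s₂|^{min(2α₁,1)}(s₁+s₂)^{max(2α₁-1,0)} + |s₁-s₂|^{min(2α₂,1)}(s₁+s₂)^{max(2α₂-1,0)} ). -/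
open Real Set intervalIntegral

private lemma rpow_add_le_add_rpow' {a b p : ℝ} (ha : 0 ≤ a) (hb : 0 ≤ b)
    (hp : 0 ≤ p) (hp1 : p ≤ 1) : (a + b) ^ p ≤ a ^ p + b ^ p := by
  have h := NNReal.rpow_add_le_add_rpow a.toNNReal b.toNNReal hp hp1
  have h2 := NNReal.coe_le_coe.2 h
  push_cast [Real.coe_toNNReal a ha, Real.coe_toNNReal b hb] at h2
  exact h2

/-- key elementary inequality, ordered case -/
private lemma key_ineq {a b β : ℝ} (hb : 0 < b) (hba : b ≤ a) (hβ : 0 < β) :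
    a ^ β - b ^ β ≤ max 1 β * ((a - b) ^ min β 1 * (a + b) ^ max (β - 1) 0) := by
  have ha : 0 < a := lt_of_lt_of_le hb hba
  rcases le_or_gt β 1 with h1 | h1
  · -- β ≤ 1
    rw [min_eq_left h1, max_eq_right (show β - 1 ≤ (0:ℝ) by linarith), Real.rpow_zero, mul_one]
    have : a ^ β ≤ (a - b) ^ β + b ^ β := by
      have := rpow_add_le_add_rpow' (by linarith : (0:ℝ) ≤ a - b) hb.le hβ.le h1
      simpa using this
    have h2 : a ^ β - b ^ β ≤ (a - b) ^ β := by linarith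
    calc a ^ β - b ^ β ≤ (a - b) ^ β := h2
      _ ≤ max 1 β * (a - b) ^ β := by
          nlinarith [Real.rpow_nonneg (by linarith : (0:ℝ) ≤ a - b) β,
            le_max_left (1:ℝ) β]
  · -- β > 1 : mean value theorem
    rw [min_eq_right h1.le, Real.rpow_one, max_eq_right h1.le,
      max_eq_left (show (0:ℝ) ≤ β - 1 by linarith)]
    rcases eq_or_lt_of_le hba with rfl | hba'
    · simp
    · have hder : ∀ x : ℝ, HasDerivAt (fun y : ℝ => y ^ β)
          (β * x ^ (β - 1)) x := by
        intro x
        simpa [mul_comm] using Real.hasDerivAt_rpow_const (p := β) (x := x) (Or.inr h1.le)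
      have hcont : ContinuousOn (fun y : ℝ => y ^ β) (Set.Icc b a) :=
        fun x _ => ((hder x).continuousAt).continuousWithinAt
      obtain ⟨c, hc, hceq⟩ := exists_hasDerivAt_eq_slope (fun y : ℝ => y ^ β)
        (fun x => β * x ^ (β - 1)) hba' hcont (fun x _ => hder x)
      have hc0 : 0 < c := lt_trans hb hc.1
      have hab : a - b ≠ 0 := by linarith
      rw [eq_div_iff hab] at hceq
      have heq : a ^ β - b ^ β = β * c ^ (β - 1) * (a - b) := hceq.symm
      rw [heq]
      have hcle : c ^ (β - 1) ≤ (a + b) ^ (β - 1) :=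
        Real.rpow_le_rpow hc0.le (by linarith [hc.2]) (by linarith)
      have hcnn : (0:ℝ) ≤ c ^ (β - 1) := Real.rpow_nonneg hc0.le _
      have habnn : (0:ℝ) ≤ (a + b) ^ (β - 1) := Real.rpow_nonneg (by positivity) _
      nlinarith [mul_le_mul_of_nonneg_left
        (mul_le_mul_of_nonneg_right hcle (show (0:ℝ) ≤ a - b by linarith)) hβ.le]

private lemma rpow_sub_bound {a b β : ℝ} (ha : 0 < a) (hb : 0 < b) (hβ : 0 < β) :
    |a ^ β - b ^ β| ≤ max 1 β * (|a - b| ^ min β 1 * (a + b) ^ max (β - 1) 0) := by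
  rcases le_total b a with h | h
  · rw [abs_of_nonneg (sub_nonneg.2 (Real.rpow_le_rpow hb.le h hβ.le)),
      abs_of_nonneg (sub_nonneg.2 h)]
    exact key_ineq hb h hβ
  · rw [abs_of_nonpos (sub_nonpos.2 (Real.rpow_le_rpow ha.le h hβ.le)), neg_sub,
      abs_of_nonpos (sub_nonpos.2 h), neg_sub, add_comm a b]
    exact key_ineq ha h hβ

/-- Hölder continuity of `s ↦ g(s²)` under the growth bound `|s g'(s)| ≤ C (s^α₁ + s^α₂)`. -/
theorem stmt_4 (g : ℝ → ℝ) (C α₁ α₂ : ℝ) (hC : 0 < C) (hα₁ : 0 < α₁) (hα₁₂ : α₁ ≤ α₂)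
    (hg0 : ContinuousOn g (Set.Ici 0)) (hg : ContDiffOn ℝ 2 g (Set.Ioi 0))
    (hgzero : g 0 = 0)
    (hbound : ∀ s : ℝ, 0 < s → |s * deriv g s| ≤ C * (s ^ α₁ + s ^ α₂)) :
    ∃ C' : ℝ, 0 < C' ∧ ∀ s₁ s₂ : ℝ, 0 < s₁ → 0 < s₂ →
      |g (s₁ ^ 2) - g (s₂ ^ 2)|
        ≤ C' * (|s₁ - s₂| ^ min (2 * α₁) 1 * (s₁ + s₂) ^ max (2 * α₁ - 1) 0
              + |s₁ - s₂| ^ min (2 * α₂) 1 * (s₁ + s₂) ^ max (2 * α₂ - 1) 0) := by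
  have hα₂ : 0 < α₂ := lt_of_lt_of_le hα₁ hα₁₂
  -- continuity of deriv g on Ioi 0
  have hderiv_cont : ContinuousOn (deriv g) (Set.Ioi 0) := by
    have h := hg.continuousOn_derivWithin (uniqueDiffOn_Ioi 0) (by norm_num)
    refine h.congr fun x hx => ?_
    exact (derivWithin_of_isOpen isOpen_Ioi hx).symm
  -- pointwise bound on |deriv g|
  have hptw : ∀ t : ℝ, 0 < t → |deriv g t| ≤ C * (t ^ (α₁ - 1) + t ^ (α₂ - 1)) := by
    intro t ht
    have h1 := hbound t ht
    rw [abs_mul, abs_of_pos ht] at h1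
    have h2 : |deriv g t| ≤ C * (t ^ α₁ + t ^ α₂) / t := by
      rw [le_div_iff₀ ht]; linarith [h1]
    calc |deriv g t| ≤ C * (t ^ α₁ + t ^ α₂) / t := h2
      _ = C * (t ^ (α₁ - 1) + t ^ (α₂ - 1)) := by
          rw [Real.rpow_sub ht, Real.rpow_sub ht, Real.rpow_one]
          field_simp
  -- FTC estimate
  have hftc : ∀ a b : ℝ, 0 < b → b ≤ a →
      |g a - g b| ≤ C / α₁ * (a ^ α₁ - b ^ α₁) + C / α₂ * (a ^ α₂ - b ^ α₂) := by
    intro a b hb hba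
    have hsub : Set.uIcc b a ⊆ Set.Ioi 0 := by
      rw [Set.uIcc_of_le hba]
      intro x hx; exact lt_of_lt_of_le hb hx.1
    have hder : ∀ x ∈ Set.uIcc b a, HasDerivAt g (deriv g x) x := by
      intro x hx
      have hx0 : x ∈ Set.Ioi 0 := hsub hx
      exact ((hg.contDiffAt (Ioi_mem_nhds hx0)).differentiableAt
        (by norm_num)).hasDerivAt
    have hint : IntervalIntegrable (deriv g) MeasureTheory.volume b a :=
      (hderiv_cont.mono hsub).intervalIntegrable
    have heq : ∫ t in b..a, deriv g t = g a - g b :=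
      intervalIntegral.integral_eq_sub_of_hasDerivAt hder hint
    have hcont1 : ContinuousOn (fun t : ℝ => t ^ (α₁ - 1)) (Set.uIcc b a) :=
      fun x hx => (Real.continuousAt_rpow_const x (α₁ - 1)
        (Or.inl (ne_of_gt (hsub hx)))).continuousWithinAt
    have hcont2 : ContinuousOn (fun t : ℝ => t ^ (α₂ - 1)) (Set.uIcc b a) :=
      fun x hx => (Real.continuousAt_rpow_const x (α₂ - 1)
        (Or.inl (ne_of_gt (hsub hx)))).continuousWithinAt
    have hi1 : IntervalIntegrable (fun t : ℝ => t ^ (α₁ - 1)) MeasureTheory.volume b a :=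
      hcont1.intervalIntegrable
    have hi2 : IntervalIntegrable (fun t : ℝ => t ^ (α₂ - 1)) MeasureTheory.volume b a :=
      hcont2.intervalIntegrable
    have hintR : IntervalIntegrable (fun t : ℝ => C * (t ^ (α₁ - 1) + t ^ (α₂ - 1)))
        MeasureTheory.volume b a := ((hi1.add hi2).const_mul C)
    have habs : |g a - g b| ≤ ∫ t in b..a, |deriv g t| := by
      rw [← heq]
      exact intervalIntegral.abs_integral_le_integral_abs hba
    have hmono : (∫ t in b..a, |deriv g t|)
        ≤ ∫ t in b..a, C * (t ^ (α₁ - 1) + t ^ (α₂ - 1)) := by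
      apply intervalIntegral.integral_mono_on hba hint.abs hintR
      intro x hx
      exact hptw x (lt_of_lt_of_le hb hx.1)
    have hcalc : (∫ t in b..a, C * (t ^ (α₁ - 1) + t ^ (α₂ - 1)))
        = C / α₁ * (a ^ α₁ - b ^ α₁) + C / α₂ * (a ^ α₂ - b ^ α₂) := by
      rw [intervalIntegral.integral_const_mul, intervalIntegral.integral_add hi1 hi2,
        integral_rpow (Or.inl (by linarith : (-1:ℝ) < α₁ - 1)),
        integral_rpow (Or.inl (by linarith : (-1:ℝ) < α₂ - 1))]
      have e1 : α₁ - 1 + 1 = α₁ := by ring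
      have e2 : α₂ - 1 + 1 = α₂ := by ring
      rw [e1, e2]
      field_simp
    linarith [habs, hmono, le_of_eq hcalc]
  -- square-to-rpow identity
  have hsq : ∀ s : ℝ, 0 < s → ∀ α : ℝ, ((s ^ 2 : ℝ)) ^ α = s ^ (2 * α) := by
    intro s hs α
    rw [← Real.rpow_natCast s 2, ← Real.rpow_mul hs.le]
    norm_num
  set M : ℝ := max 1 (2 * α₂) with hM
  have hM1 : (1:ℝ) ≤ M := le_max_left _ _
  refine ⟨(C / α₁ + C / α₂) * M, by positivity, ?_⟩
  have main : ∀ s₁ s₂ : ℝ, 0 < s₁ → 0 < s₂ → s₂ ≤ s₁ →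
      |g (s₁ ^ 2) - g (s₂ ^ 2)|
        ≤ (C / α₁ + C / α₂) * M * (|s₁ - s₂| ^ min (2 * α₁) 1 * (s₁ + s₂) ^ max (2 * α₁ - 1) 0
              + |s₁ - s₂| ^ min (2 * α₂) 1 * (s₁ + s₂) ^ max (2 * α₂ - 1) 0) := by
    intro s₁ s₂ h₁ h₂ h21
    have hba : s₂ ^ 2 ≤ s₁ ^ 2 := by nlinarith
    have hF := hftc (s₁ ^ 2) (s₂ ^ 2) (by positivity) hba
    rw [hsq s₁ h₁ α₁, hsq s₂ h₂ α₁, hsq s₁ h₁ α₂, hsq s₂ h₂ α₂] at hF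
    set T₁ : ℝ := |s₁ - s₂| ^ min (2 * α₁) 1 * (s₁ + s₂) ^ max (2 * α₁ - 1) 0 with hT₁
    set T₂ : ℝ := |s₁ - s₂| ^ min (2 * α₂) 1 * (s₁ + s₂) ^ max (2 * α₂ - 1) 0 with hT₂
    have hT₁nn : 0 ≤ T₁ := by
      apply mul_nonneg (Real.rpow_nonneg (abs_nonneg _) _)
        (Real.rpow_nonneg (by positivity) _)
    have hT₂nn : 0 ≤ T₂ := by
      apply mul_nonneg (Real.rpow_nonneg (abs_nonneg _) _)
        (Real.rpow_nonneg (by positivity) _)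
    have hb1 : s₁ ^ (2 * α₁) - s₂ ^ (2 * α₁) ≤ max 1 (2 * α₁) * T₁ := by
      have := rpow_sub_bound h₁ h₂ (by linarith : (0:ℝ) < 2 * α₁)
      calc s₁ ^ (2 * α₁) - s₂ ^ (2 * α₁) ≤ |s₁ ^ (2 * α₁) - s₂ ^ (2 * α₁)| := le_abs_self _
        _ ≤ _ := this
    have hb2 : s₁ ^ (2 * α₂) - s₂ ^ (2 * α₂) ≤ max 1 (2 * α₂) * T₂ := by
      have := rpow_sub_bound h₁ h₂ (by linarith : (0:ℝ) < 2 * α₂)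
      calc s₁ ^ (2 * α₂) - s₂ ^ (2 * α₂) ≤ |s₁ ^ (2 * α₂) - s₂ ^ (2 * α₂)| := le_abs_self _
        _ ≤ _ := this
    have hMle : max 1 (2 * α₁) ≤ M := max_le_max (le_refl 1) (by linarith)
    have hK₁ : 0 < C / α₁ := by positivity
    have hK₂ : 0 < C / α₂ := by positivity
    calc |g (s₁ ^ 2) - g (s₂ ^ 2)|
        ≤ C / α₁ * (s₁ ^ (2 * α₁) - s₂ ^ (2 * α₁))
          + C / α₂ * (s₁ ^ (2 * α₂) - s₂ ^ (2 * α₂)) := hF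
      _ ≤ C / α₁ * (max 1 (2 * α₁) * T₁) + C / α₂ * (max 1 (2 * α₂) * T₂) := by
          have := mul_le_mul_of_nonneg_left hb1 hK₁.le
          have := mul_le_mul_of_nonneg_left hb2 hK₂.le
          linarith
      _ ≤ (C / α₁ + C / α₂) * M * (T₁ + T₂) := by
          have hM0 : (0:ℝ) ≤ M := by linarith
          have hA : C / α₁ * (max 1 (2 * α₁) * T₁) ≤ C / α₁ * (M * T₁) :=
            mul_le_mul_of_nonneg_left (mul_le_mul_of_nonneg_right hMle hT₁nn) hK₁.le
          nlinarith [mul_nonneg (mul_nonneg hM0 hK₂.le) hT₁nn,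
            mul_nonneg (mul_nonneg hM0 hK₁.le) hT₂nn]
      _ = _ := by ring
  intro s₁ s₂ h₁ h₂
  rcases le_total s₂ s₁ with h | h
  · exact main s₁ s₂ h₁ h₂ h
  · have := main s₂ s₁ h₂ h₁ h
    rw [abs_sub_comm (s₂ : ℝ) s₁, add_comm s₂ s₁, abs_sub_comm (g (s₂ ^ 2))] at this
    exact this
end
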